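/- For every irrational x ∈ (0,1] and every n ≥ 1, the R-denominators satisfy q̂_n(x) ≥ max{n + 2, 3^{n/3}}. In particular q̂_n(x) ≥ 3^{n/3} for all n ∈ ℕ. -/

import Mathlib

open MeasureTheory Filter

noncomputable section

/-- The ECF digit `k` of a point `x ∈ (0,1]`: `x ∈ B(k,ξ)`. -/
def ecfK (x : ℝ) : ℕ := (⌊1/x⌋ + 1).toNat / 2

/-- The ECF digit `ξ` of a point `x ∈ (0,1]`. -/
def ecfXi (x : ℝ) : ℤ := if ⌊1/x⌋ % 2 = 0 then 1 else -1

/-- The ECF Gauss-like map `T(x) = ξ (1/x - 2k)` for `x ∈ B(k,ξ)`. -/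
def ecfT (x : ℝ) : ℝ := (ecfXi x : ℝ) * (1/x - 2 * (ecfK x : ℝ))

/-- The domain: irrational points of `(0,1]`. -/
def ECFdom : Set ℝ := {x | x ∈ Set.Ioc (0:ℝ) 1 ∧ Irrational x}

/-- The `n`-th ECF digit `k_n(x)` (for `n ≥ 1`). -/
def ecfDigK (x : ℝ) (n : ℕ) : ℕ := ecfK (ecfT^[n-1] x)

/-- The `n`-th ECF digit `ξ_n(x)` (for `n ≥ 1`), with the convention `ξ_0 = 1`. -/
def ecfDigXi (x : ℝ) (n : ℕ) : ℤ := if n = 0 then 1 else ecfXi (ecfT^[n-1] x)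

/-- Numerators of continued fractions with even partial quotients built from digit
sequences `(k_n)_{n≥1}`, `(ξ_n)_{n≥0}`:
`p_n = 2 k_n p_{n-1} + ξ_{n-1} p_{n-2}`, `p_0 = 0`, `p_{-1} = 1`. -/
def cfP (k : ℕ → ℕ) (ξ : ℕ → ℤ) : ℕ → ℤ
  | 0 => 0
  | 1 => ξ 0
  | (n+2) => 2 * (k (n+2) : ℤ) * cfP k ξ (n+1) + ξ (n+1) * cfP k ξ n

/-- Denominators: `q_n = 2 k_n q_{n-1} + ξ_{n-1} q_{n-2}`, `q_0 = 1`, `q_{-1} = 0`. -/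
def cfQ (k : ℕ → ℕ) (ξ : ℕ → ℤ) : ℕ → ℤ
  | 0 => 1
  | 1 => 2 * (k 1 : ℤ)
  | (n+2) => 2 * (k (n+2) : ℤ) * cfQ k ξ (n+1) + ξ (n+1) * cfQ k ξ n

/-- The ECF convergent numerators `p_n(x)`. -/
def ecfP (x : ℝ) : ℕ → ℤ := cfP (ecfDigK x) (ecfDigXi x)

/-- The ECF convergent denominators `q_n(x)`. -/
def ecfQ (x : ℝ) : ℕ → ℤ := cfQ (ecfDigK x) (ecfDigXi x)

/-- `τ(x) = min {j ≥ 0 : T^j(x) ∈ (0,1/2]}`. -/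
def ecfTau (x : ℝ) : ℕ := sInf {j : ℕ | ecfT^[j] x ∈ Set.Ioc (0:ℝ) (1/2)}

/-- The jump transformation `R(x) = T^{τ(x)+1}(x)`. -/
def ecfR (x : ℝ) : ℝ := ecfT^[ecfTau x + 1] x

/-- `ν_0(x) = 1`, `ν_n(x) = ν_{n-1}(x) + τ(R^{n-1}(x)) + 1`. -/
def ecfNu (x : ℝ) : ℕ → ℕ
  | 0 => 1
  | (n+1) => ecfNu x n + ecfTau (ecfR^[n] x) + 1

/-- The `R`-denominators: `q̂_0(x) = 1`, `q̂_n(x) = q_{ν_n(x)}(x)`. -/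
def ecfQhat (x : ℝ) (n : ℕ) : ℤ := if n = 0 then 1 else ecfQ x (ecfNu x n)

/-- The renewal time `n̂_L(x) = min {n ≥ 1 : q̂_n(x) > L}`. -/
def ecfNhat (x : ℝ) (L : ℝ) : ℕ := sInf {n : ℕ | 1 ≤ n ∧ L < (ecfQhat x n : ℝ)}

/-- The `R`-invariant probability measure `μ`, with density
`f(x) = (1/log 3)(1/(3-x) + 1/(1+x))` on `(0,1]`. -/
def ecfMu : Measure ℝ :=
  (volume.restrict (Set.Ioc 0 1)).withDensity
    (fun x => ENNReal.ofReal ((1/Real.log 3) * (1/(3-x) + 1/(1+x))))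

/-- Σ-coding components: `h_n(x) = τ(R^{n-1}(x))`. -/
def sigmaH (x : ℝ) (n : ℕ) : ℕ := ecfTau (ecfR^[n-1] x)

/-- Σ-coding components: `m_n(x) = k_{ν_n(x)-1}(x)`. -/
def sigmaM (x : ℝ) (n : ℕ) : ℕ := ecfDigK x (ecfNu x n - 1)

/-- Σ-coding components: `ε_n(x) = ξ_{ν_n(x)-1}(x)`. -/
def sigmaE (x : ℝ) (n : ℕ) : ℤ := ecfDigXi x (ecfNu x n - 1)

/-- The alphabet `Σ = ℕ₀ × ((ℕ × {±1}) ∖ {(1,-1)})`, as a subset of `ℕ × (ℕ × ℤ)`. -/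
def SigmaSymb : Set (ℕ × (ℕ × ℤ)) :=
  {s | 1 ≤ s.2.1 ∧ ((s.2.2 = 1 ∨ s.2.2 = -1) ∧ ¬(s.2.1 = 1 ∧ s.2.2 = -1))}

/-- The full Σ-coding `σ_n(x) = (h_n, (m_n, ε_n))`. -/
def sigmaCode (x : ℝ) (n : ℕ) : ℕ × (ℕ × ℤ) := (sigmaH x n, (sigmaM x n, sigmaE x n))

end

/-!
Every digit pair of `x` is `(k, ξ)` with `k ≥ 1` and `ξ = ±1`, so `q_{n+2} ≥ 2 q_{n+1} - q_n`:
the `q_n` increase by at least one at each step, and `q̂_n = q_{ν_n} ≥ ν_n + 1 ≥ n + 2`.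

For the exponential bound, the digit of index `ν_{n+1} - 1` is read off the point
`T^τ(R^n x) ∈ (0, 1/2]`, so it is not `(1, -1)`: either `ξ = +1`, or `k ≥ 2` and then
`q_{ν_{n+1}-1} ≥ 3 q_{ν_{n+1}-2}`. In both cases `q̂_{n+1} ≥ (3/2) q_{ν_{n+1}-1} ≥ (3/2) q̂_n`,
hence `q̂_n ≥ (3/2)^n ≥ 3^{n/3}`.

`τ` is finite because on `(1/2, 1)` the map is `T x = 2 - 1/x`, which lowers `1 / (1 - x)` by
exactly one.
-/

section ContinuedFractionDenominators

variable {k : ℕ → ℕ} {ξ : ℕ → ℤ}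

theorem le_cfQ_add_two (hξ : ∀ i, -1 ≤ ξ i) {i : ℕ} (hq : 0 ≤ cfQ k ξ i) :
    2 * (k (i + 2) : ℤ) * cfQ k ξ (i + 1) - cfQ k ξ i ≤ cfQ k ξ (i + 2) := by
  rw [cfQ]
  nlinarith [hξ (i + 1)]

theorem cfQ_nonneg_and_add_one_le (hk : ∀ i, 1 ≤ k i) (hξ : ∀ i, -1 ≤ ξ i) (i : ℕ) :
    0 ≤ cfQ k ξ i ∧ cfQ k ξ i + 1 ≤ cfQ k ξ (i + 1) := by
  induction i with
  | zero =>
    have := hk 1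
    simp only [cfQ]
    omega
  | succ i ih =>
    have hstep := le_cfQ_add_two hξ ih.1
    have hk2 : (1 : ℤ) ≤ k (i + 2) := by exact_mod_cast hk (i + 2)
    constructor <;> nlinarith

theorem cfQ_nonneg (hk : ∀ i, 1 ≤ k i) (hξ : ∀ i, -1 ≤ ξ i) (i : ℕ) : 0 ≤ cfQ k ξ i :=
  (cfQ_nonneg_and_add_one_le hk hξ i).1

theorem cfQ_strictMono (hk : ∀ i, 1 ≤ k i) (hξ : ∀ i, -1 ≤ ξ i) : StrictMono (cfQ k ξ) :=
  strictMono_nat_of_lt_succ fun i => (cfQ_nonneg_and_add_one_le hk hξ i).2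

theorem add_one_le_cfQ (hk : ∀ i, 1 ≤ k i) (hξ : ∀ i, -1 ≤ ξ i) (i : ℕ) :
    (i : ℤ) + 1 ≤ cfQ k ξ i := by
  induction i with
  | zero => simp [cfQ]
  | succ i ih =>
    have := (cfQ_nonneg_and_add_one_le hk hξ i).2
    push_cast
    omega

theorem three_mul_cfQ_le (hk : ∀ i, 1 ≤ k i) (hξ : ∀ i, -1 ≤ ξ i) {i : ℕ} (h : 2 ≤ k (i + 1)) :
    3 * cfQ k ξ i ≤ cfQ k ξ (i + 1) := by
  cases i with
  | zero => simp only [cfQ, zero_add] at h ⊢; omega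
  | succ i =>
    have hstep := le_cfQ_add_two hξ (cfQ_nonneg hk hξ i)
    have hmono := (cfQ_strictMono hk hξ).monotone (Nat.le_succ i)
    have hk2 : (2 : ℤ) ≤ k (i + 2) := by exact_mod_cast h
    nlinarith [cfQ_nonneg hk hξ (i + 1)]

theorem three_mul_cfQ_le_two_mul (hk : ∀ i, 1 ≤ k i) (hξ : ∀ i, -1 ≤ ξ i) {i : ℕ}
    (h : 0 ≤ ξ (i + 1) ∨ 2 ≤ k (i + 1)) :
    3 * cfQ k ξ (i + 1) ≤ 2 * cfQ k ξ (i + 2) := by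
  have hq₀ := cfQ_nonneg hk hξ i
  have hq₁ := cfQ_nonneg hk hξ (i + 1)
  have hk2 : (1 : ℤ) ≤ k (i + 2) := by exact_mod_cast hk (i + 2)
  have hrec : cfQ k ξ (i + 2) = 2 * k (i + 2) * cfQ k ξ (i + 1) + ξ (i + 1) * cfQ k ξ i := rfl
  rcases h with hξ₁ | hk₁
  · nlinarith
  · nlinarith [three_mul_cfQ_le hk hξ hk₁, hξ (i + 1)]

end ContinuedFractionDenominators

section ECFMap

variable {x : ℝ}

theorem two_mul_ecfK_of_even (hx : 0 < x) (h : Even ⌊1 / x⌋) :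
    2 * (ecfK x : ℝ) = ⌊1 / x⌋ := by
  have h0 : 0 ≤ ⌊1 / x⌋ := Int.floor_nonneg.mpr (by positivity)
  obtain ⟨m, hm⟩ := h
  have : 2 * (ecfK x : ℤ) = ⌊1 / x⌋ := by unfold ecfK; omega
  exact_mod_cast this

theorem two_mul_ecfK_of_odd (hx : 0 < x) (h : Odd ⌊1 / x⌋) :
    2 * (ecfK x : ℝ) = ⌊1 / x⌋ + 1 := by
  have h0 : 0 ≤ ⌊1 / x⌋ := Int.floor_nonneg.mpr (by positivity)
  obtain ⟨m, hm⟩ := h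
  have : 2 * (ecfK x : ℤ) = ⌊1 / x⌋ + 1 := by unfold ecfK; omega
  exact_mod_cast this

theorem ecfT_of_even (hx : 0 < x) (h : Even ⌊1 / x⌋) : ecfT x = Int.fract (1 / x) := by
  have hξ : ecfXi x = 1 := if_pos (Int.even_iff.mp h)
  rw [ecfT, hξ, two_mul_ecfK_of_even hx h, Int.fract]
  simp

theorem ecfT_of_odd (hx : 0 < x) (h : Odd ⌊1 / x⌋) : ecfT x = 1 - Int.fract (1 / x) := by
  have hξ : ecfXi x = -1 := if_neg (by rw [Int.odd_iff.mp h]; decide)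
  rw [ecfT, hξ, two_mul_ecfK_of_odd hx h, Int.fract]
  push_cast
  ring

theorem mapsTo_ecfT : Set.MapsTo ecfT ECFdom ECFdom := by
  rintro x ⟨⟨hx, -⟩, hirr⟩
  have hfract : Irrational (Int.fract (1 / x)) := by
    simpa only [Int.fract, one_div] using hirr.inv.sub_intCast ⌊x⁻¹⌋
  have hpos : 0 < Int.fract (1 / x) :=
    (Int.fract_nonneg _).lt_of_ne' hfract.ne_zero
  have hlt := Int.fract_lt_one (1 / x)
  rcases Int.even_or_odd ⌊1 / x⌋ with h | h
  · rw [ecfT_of_even hx h]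
    exact ⟨⟨hpos, hlt.le⟩, hfract⟩
  · rw [ecfT_of_odd hx h]
    exact ⟨⟨by linarith, by linarith⟩, by simpa using hfract.natCast_sub 1⟩

theorem ecfT_iterate_mem (hx : x ∈ ECFdom) (n : ℕ) : ecfT^[n] x ∈ ECFdom :=
  mapsTo_ecfT.iterate n hx

theorem one_le_ecfK (hx₀ : 0 < x) (hx₁ : x ≤ 1) : 1 ≤ ecfK x := by
  have : 1 ≤ ⌊1 / x⌋ := Int.le_floor.mpr (by rw [Int.cast_one, le_div_iff₀ hx₀]; linarith)
  unfold ecfK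
  omega

theorem neg_one_le_ecfXi (x : ℝ) : -1 ≤ ecfXi x := by
  unfold ecfXi
  split <;> norm_num

theorem ecfXi_nonneg_or_two_le_ecfK (hx₀ : 0 < x) (hx : x ≤ 1 / 2) :
    0 ≤ ecfXi x ∨ 2 ≤ ecfK x := by
  have : 2 ≤ ⌊1 / x⌋ := Int.le_floor.mpr (by rw [le_div_iff₀ hx₀]; push_cast; linarith)
  unfold ecfXi ecfK
  split <;> omega

theorem ecfT_of_half_lt (hx : x ∈ Set.Ioo (1 / 2 : ℝ) 1) : ecfT x = 2 - 1 / x := by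
  obtain ⟨hx₁, hx₂⟩ := hx
  have hx₀ : 0 < x := by linarith
  have hfloor : ⌊1 / x⌋ = 1 := by
    rw [Int.floor_eq_iff, le_div_iff₀ hx₀, div_lt_iff₀ hx₀]
    constructor <;> push_cast <;> linarith
  rw [ecfT_of_odd hx₀ (by rw [hfloor]; decide), Int.fract, hfloor]
  push_cast
  ring

theorem one_div_one_sub_ecfT (hx : x ∈ Set.Ioo (1 / 2 : ℝ) 1) :
    1 / (1 - ecfT x) = 1 / (1 - x) - 1 := by
  have hx₀ : x ≠ 0 := by linarith [hx.1]
  have hx₁ : 1 - x ≠ 0 := by linarith [hx.2]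
  rw [ecfT_of_half_lt hx, show 1 - (2 - 1 / x) = (1 - x) / x by field_simp; ring]
  field_simp
  ring

theorem exists_ecfT_iterate_mem_Ioc (hx : x ∈ ECFdom) :
    ∃ j, ecfT^[j] x ∈ Set.Ioc (0 : ℝ) (1 / 2) := by
  by_contra! hbig
  have hIoo (j : ℕ) : ecfT^[j] x ∈ Set.Ioo (1 / 2 : ℝ) 1 := by
    obtain ⟨⟨h₀, h₁⟩, hirr⟩ := ecfT_iterate_mem hx j
    exact ⟨not_le.mp fun h => hbig j ⟨h₀, h⟩, h₁.lt_of_ne hirr.ne_one⟩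
  have htranslate (j : ℕ) : 1 / (1 - ecfT^[j] x) = 1 / (1 - x) - j := by
    induction j with
    | zero => simp
    | succ j ih =>
      rw [Function.iterate_succ_apply', one_div_one_sub_ecfT (hIoo j), ih]
      push_cast
      ring
  obtain ⟨hlo, hhi⟩ := hIoo ⌈1 / (1 - x)⌉₊
  have hpos : 0 < 1 / (1 - ecfT^[⌈1 / (1 - x)⌉₊] x) := by
    apply div_pos one_pos
    linarith
  rw [htranslate] at hpos
  linarith [Nat.le_ceil (1 / (1 - x))]

theorem ecfT_iterate_ecfTau_mem (hx : x ∈ ECFdom) :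
    ecfT^[ecfTau x] x ∈ Set.Ioc (0 : ℝ) (1 / 2) :=
  Nat.sInf_mem (exists_ecfT_iterate_mem_Ioc hx)

end ECFMap

section RDenominators

variable {x : ℝ}

theorem succ_le_ecfNu (x : ℝ) (n : ℕ) : n + 1 ≤ ecfNu x n := by
  induction n with
  | zero => simp [ecfNu]
  | succ n ih => simp only [ecfNu]; omega

theorem ecfR_iterate_eq (x : ℝ) (n : ℕ) : ecfR^[n] x = ecfT^[ecfNu x n - 1] x := by
  induction n with
  | zero => simp [ecfNu]
  | succ n ih =>
    have := succ_le_ecfNu x n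
    rw [Function.iterate_succ_apply', ih, ecfR, ← Function.iterate_add_apply, ← ih]
    simp only [ecfNu]
    congr 1
    omega

theorem ecfT_iterate_ecfNu_sub_two_mem (hx : x ∈ ECFdom) (n : ℕ) :
    ecfT^[ecfNu x (n + 1) - 2] x ∈ Set.Ioc (0 : ℝ) (1 / 2) := by
  have hν := succ_le_ecfNu x n
  have hidx : ecfNu x (n + 1) - 2 = ecfTau (ecfR^[n] x) + (ecfNu x n - 1) := by
    simp only [ecfNu]; omega
  rw [hidx, Function.iterate_add_apply, ← ecfR_iterate_eq]
  exact ecfT_iterate_ecfTau_mem (by rw [ecfR_iterate_eq]; exact ecfT_iterate_mem hx _)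

theorem one_le_ecfDigK (hx : x ∈ ECFdom) (i : ℕ) : 1 ≤ ecfDigK x i :=
  one_le_ecfK (ecfT_iterate_mem hx _).1.1 (ecfT_iterate_mem hx _).1.2

theorem neg_one_le_ecfDigXi (x : ℝ) (i : ℕ) : -1 ≤ ecfDigXi x i := by
  unfold ecfDigXi
  split
  · norm_num
  · exact neg_one_le_ecfXi _

theorem ecfQhat_le_ecfQ (hx : x ∈ ECFdom) {n i : ℕ} (h : ecfNu x n ≤ i) :
    ecfQhat x n ≤ ecfQ x i := by
  have hmono := (cfQ_strictMono (one_le_ecfDigK hx) (neg_one_le_ecfDigXi x)).monotone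
  unfold ecfQhat
  split
  · exact hmono (Nat.zero_le i)
  · exact hmono h

theorem three_mul_ecfQhat_le (hx : x ∈ ECFdom) (n : ℕ) :
    3 * ecfQhat x n ≤ 2 * ecfQhat x (n + 1) := by
  obtain ⟨hw₀, hw⟩ := ecfT_iterate_ecfNu_sub_two_mem hx n
  set M := ecfNu x (n + 1) - 2 with hM
  have hν : ecfNu x (n + 1) = ecfNu x n + ecfTau (ecfR^[n] x) + 1 := rfl
  have hνM : ecfNu x (n + 1) = M + 2 := by have := succ_le_ecfNu x n; omega
  have hdigit : 0 ≤ ecfDigXi x (M + 1) ∨ 2 ≤ ecfDigK x (M + 1) :=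
    ecfXi_nonneg_or_two_le_ecfK hw₀ hw
  calc 3 * ecfQhat x n ≤ 3 * ecfQ x (M + 1) := by
        have := ecfQhat_le_ecfQ hx (show ecfNu x n ≤ M + 1 by omega)
        omega
    _ ≤ 2 * ecfQ x (M + 2) :=
        three_mul_cfQ_le_two_mul (one_le_ecfDigK hx) (neg_one_le_ecfDigXi x) hdigit
    _ = 2 * ecfQhat x (n + 1) := by rw [ecfQhat, if_neg n.succ_ne_zero, hνM]

theorem three_halves_pow_le_ecfQhat (hx : x ∈ ECFdom) (n : ℕ) :
    (3 / 2 : ℝ) ^ n ≤ ecfQhat x n := by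
  induction n with
  | zero => simp [ecfQhat]
  | succ n ih =>
    have hstep : 3 * (ecfQhat x n : ℝ) ≤ 2 * ecfQhat x (n + 1) := by
      exact_mod_cast three_mul_ecfQhat_le hx n
    rw [pow_succ]
    linarith

theorem add_two_le_ecfQhat (hx : x ∈ ECFdom) {n : ℕ} (hn : n ≠ 0) :
    (n : ℤ) + 2 ≤ ecfQhat x n := by
  have hq := add_one_le_cfQ (one_le_ecfDigK hx) (neg_one_le_ecfDigXi x) (ecfNu x n)
  have hν := succ_le_ecfNu x n
  rw [ecfQhat, if_neg hn]
  change _ ≤ ecfQ x _ at hq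
  omega

end RDenominators

theorem rpow_div_three_le_three_halves_pow (n : ℕ) :
    (3 : ℝ) ^ ((n : ℝ) / 3) ≤ (3 / 2) ^ n :=
  calc (3 : ℝ) ^ ((n : ℝ) / 3) ≤ ((3 / 2 : ℝ) ^ 3) ^ ((n : ℝ) / 3) := by
        gcongr
        norm_num
    _ = (3 / 2) ^ n := by
        rw [← Real.rpow_natCast_mul (by norm_num), ← Real.rpow_natCast]
        congr 1
        push_cast
        ring

/-- Lower bound for the growth of the `R`-denominators:
`q̂_n(x) ≥ max (n+2) 3^{n/3}` for `n ≥ 1`, and `q̂_n(x) ≥ 3^{n/3}` for all `n`. -/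
theorem ecfQhat_lower_bound :
    ∀ x ∈ ECFdom,
      (∀ n : ℕ, 1 ≤ n →
        max ((n : ℝ) + 2) ((3 : ℝ) ^ ((n : ℝ) / 3)) ≤ (ecfQhat x n : ℝ)) ∧
      (∀ n : ℕ, (3 : ℝ) ^ ((n : ℝ) / 3) ≤ (ecfQhat x n : ℝ)) := by
  intro x hx
  have hpow (n : ℕ) : (3 : ℝ) ^ ((n : ℝ) / 3) ≤ ecfQhat x n :=
    (rpow_div_three_le_three_halves_pow n).trans (three_halves_pow_le_ecfQhat hx n)
  refine ⟨fun n hn => max_le ?_ (hpow n), hpow⟩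
  exact_mod_cast add_two_le_ecfQhat hx (Nat.one_le_iff_ne_zero.mp hn)
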